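/- arXiv:1607.02719 — 4 statements merged into one kernel-verified Lean document; each statement's English description precedes it below -/
import Mathlib

section
/- Let F be a field of characteristic 2 and K = F(η) a separable quadratic extension with η² + η = δ ∈ F \ ℘(F), where ℘(F) = {x² + x : x ∈ F}. Then K^{×2} ∩ F^× = F^{×2}; that is, if an element of F^× is a square in K, it is already a square in F. -/
/-!
Since `δ ∉ ℘(F)`, `η ∉ F`, so `1, η` is an `F`-basis of `K`. Writing `k = x + yη`, the Frobenius
in characteristic 2 gives `k² = (x² + y²δ) + y²η`; this lies in `F` only if `y = 0`, so `k ∈ F`.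
-/

open Module

section QuadraticExtension

variable {F K : Type*} [Field F]

theorem linearIndependent_one_pair_of_notMem_range [Ring K] [Nontrivial K] [Algebra F K] {η : K}
    (hη : η ∉ Set.range (algebraMap F K)) : LinearIndependent F ![1, η] :=
  (LinearIndependent.pair_iff' one_ne_zero).2 fun c hc =>
    hη ⟨c, by rwa [Algebra.algebraMap_eq_smul_one]⟩

theorem exists_algebraMap_add_smul_eq_of_finrank_eq_two [Ring K] [Nontrivial K] [Algebra F K]
    (hrank : finrank F K = 2) {η : K} (hη : η ∉ Set.range (algebraMap F K)) (k : K) :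
    ∃ x y : F, algebraMap F K x + y • η = k := by
  have hspan := (linearIndependent_one_pair_of_notMem_range hη).span_eq_top_of_card_eq_finrank
    (by simp [hrank])
  rw [Matrix.range_cons_cons_empty] at hspan
  obtain ⟨x, y, hxy⟩ := Submodule.mem_span_pair.1 (hspan ▸ Submodule.mem_top : k ∈ _)
  exact ⟨x, y, by rwa [Algebra.algebraMap_eq_smul_one]⟩

theorem notMem_range_algebraMap_of_sq_add_self_eq [Ring K] [Nontrivial K] [Algebra F K] {δ : F}
    (hδ : ¬ ∃ x : F, x ^ 2 + x = δ) {η : K} (hη : η ^ 2 + η = algebraMap F K δ) :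
    η ∉ Set.range (algebraMap F K) := by
  rintro ⟨u, rfl⟩
  exact hδ ⟨u, (algebraMap F K).injective (by simpa using hη)⟩

theorem sq_algebraMap_add_smul_of_sq_add_self_eq [CharP F 2] [CommRing K] [Algebra F K] {δ : F}
    {η : K} (hη : η ^ 2 + η = algebraMap F K δ) (x y : F) :
    (algebraMap F K x + y • η) ^ 2 = algebraMap F K (x ^ 2 + y ^ 2 * δ) + y ^ 2 • η := by
  have h2 : (2 : K) = 0 := by rw [← map_ofNat (algebraMap F K), CharTwo.two_eq_zero, map_zero]
  simp only [Algebra.smul_def, map_add, map_mul, map_pow]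
  linear_combination algebraMap F K y ^ 2 * hη +
    (algebraMap F K x * algebraMap F K y * η - algebraMap F K y ^ 2 * η) * h2

end QuadraticExtension

theorem stmt0_general (F K : Type*) [Field F] [CharP F 2] [Field K] [Algebra F K]
    (δ : F) (hδ : ¬ ∃ x : F, x ^ 2 + x = δ)
    (η : K) (hη : η ^ 2 + η = algebraMap F K δ)
    (hrank : Module.finrank F K = 2)
    (a : F) (k : K) (hk : k ^ 2 = algebraMap F K a) :
    ∃ f : F, f ^ 2 = a := by
  have hηF := notMem_range_algebraMap_of_sq_add_self_eq hδ hη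
  obtain ⟨x, y, rfl⟩ := exists_algebraMap_add_smul_eq_of_finrank_eq_two hrank hηF k
  rw [sq_algebraMap_add_smul_of_sq_add_self_eq hη, ← eq_sub_iff_add_eq', ← map_sub] at hk
  obtain rfl : y = 0 := by
    by_contra hy
    refine hηF ⟨(y ^ 2)⁻¹ * (a - (x ^ 2 + y ^ 2 * δ)), ?_⟩
    rw [map_mul, ← Algebra.smul_def, ← hk, inv_smul_smul₀ (pow_ne_zero 2 hy)]
  rw [zero_pow two_ne_zero, zero_smul, zero_mul, add_zero, eq_comm,
    map_eq_zero_iff _ (algebraMap F K).injective, sub_eq_zero] at hk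
  exact ⟨x, hk.symm⟩

/-- For `K = F(η)` a separable quadratic extension of a field `F` of
characteristic 2, with `η² + η = δ ∉ ℘(F)`, one has `K^{×2} ∩ F^× = F^{×2}`:
any nonzero element of `F` that is a square in `K` is a square in `F`. -/
theorem stmt0 (F K : Type*) [Field F] [CharP F 2] [Field K] [Algebra F K]
    (δ : F) (hδ : ¬ ∃ x : F, x ^ 2 + x = δ)
    (η : K) (hη : η ^ 2 + η = algebraMap F K δ)
    (hrank : Module.finrank F K = 2)
    (a : F) (ha : a ≠ 0) (k : K) (hk : k ^ 2 = algebraMap F K a) :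
    ∃ f : F, f ^ 2 = a :=
  stmt0_general F K δ hδ η hη hrank a k hk
end

section
/- Let E be a field of characteristic 2 and Q = [a,b)_E the quaternion algebra with generators u, v satisfying u² + u = a, v² = b ∈ E^×, and uv = vu + v. If b ∉ E^{×2}, then Q splits (is isomorphic to M₂(E)) if and only if there exists c ∈ E with a + c²·b ∈ ℘(E) = {x² + x : x ∈ E}. -/
/-- The defining relations of the characteristic-2 quaternion algebra `[a,b)_E`:
generators `u = X 0`, `v = X 1` with `u² = a + u` (i.e. `u² + u = a`), `v² = b`,
and `u v = v u + v`. -/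
inductive QuatRel (E : Type*) [Field E] (a b : E) :
    FreeAlgebra E (Fin 2) → FreeAlgebra E (Fin 2) → Prop
  | u_sq : QuatRel E a b (FreeAlgebra.ι E 0 * FreeAlgebra.ι E 0)
      (algebraMap E _ a + FreeAlgebra.ι E 0)
  | v_sq : QuatRel E a b (FreeAlgebra.ι E 1 * FreeAlgebra.ι E 1) (algebraMap E _ b)
  | mul : QuatRel E a b (FreeAlgebra.ι E 0 * FreeAlgebra.ι E 1)
      (FreeAlgebra.ι E 1 * FreeAlgebra.ι E 0 + FreeAlgebra.ι E 1)

/-- The characteristic-2 quaternion algebra `[a,b)_E`. -/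
def Quat (E : Type*) [Field E] (a b : E) := RingQuot (QuatRel E a b)

noncomputable instance (E : Type*) [Field E] (a b : E) : Ring (Quat E a b) :=
  inferInstanceAs (Ring (RingQuot (QuatRel E a b)))

noncomputable instance (E : Type*) [Field E] (a b : E) : Algebra E (Quat E a b) :=
  inferInstanceAs (Algebra E (RingQuot (QuatRel E a b)))

/-!
If `U, V ∈ M₂(E)` satisfy the relations, then `V² = b` with `b` not a square forces `e₀, V e₀` to be
a basis of `E²`; writing `U e₀ = x e₀ + c V e₀`, the relations give `a + c²b = x² + x`.
Conversely, `u ↦ !![x, c; cb, x + 1]`, `v ↦ !![0, 1; b, 0]` respects the relations, its image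
contains `U + x + cV = E₁₁` and `V`, hence all matrix units, and a surjection from the
at most 4-dimensional `[a,b)_E` onto `M₂(E)` is bijective.
-/

namespace Quat

variable {E : Type*} [Field E] {a b : E}

noncomputable def mkAlgHom : FreeAlgebra E (Fin 2) →ₐ[E] Quat E a b :=
  RingQuot.mkAlgHom E (QuatRel E a b)

theorem mkAlgHom_surjective : Function.Surjective (mkAlgHom : _ →ₐ[E] Quat E a b) :=
  RingQuot.mkAlgHom_surjective E _

noncomputable def u : Quat E a b := mkAlgHom (FreeAlgebra.ι E 0)

noncomputable def v : Quat E a b := mkAlgHom (FreeAlgebra.ι E 1)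

theorem u_mul_u : (u : Quat E a b) * u = algebraMap E _ a + u := by
  have h := RingQuot.mkAlgHom_rel E (QuatRel.u_sq (a := a) (b := b))
  simp only [map_mul, map_add, AlgHom.commutes] at h
  exact h

theorem v_mul_v : (v : Quat E a b) * v = algebraMap E _ b := by
  have h := RingQuot.mkAlgHom_rel E (QuatRel.v_sq (a := a) (b := b))
  simp only [map_mul, AlgHom.commutes] at h
  exact h

theorem u_mul_v : (u : Quat E a b) * v = v * u + v := by
  have h := RingQuot.mkAlgHom_rel E (QuatRel.mul (a := a) (b := b))
  simp only [map_mul, map_add] at h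
  exact h

theorem v_mul_u : (v : Quat E a b) * u = u * v - v := by
  rw [u_mul_v, add_sub_cancel_right]

section lift

variable {A : Type*} [Ring A] [Algebra E A] (U V : A) (hU : U * U = algebraMap E A a + U)
  (hV : V * V = algebraMap E A b) (hUV : U * V = V * U + V)

noncomputable def lift : Quat E a b →ₐ[E] A :=
  RingQuot.liftAlgHom E ⟨FreeAlgebra.lift E ![U, V], fun {_ _} (h : QuatRel E a b _ _) ↦ by
    cases h <;> simp [hU, hV, hUV]⟩

theorem lift_u : lift U V hU hV hUV u = U :=
  (RingQuot.liftAlgHom_mkAlgHom_apply E _ _ _).trans (by simp)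

theorem lift_v : lift U V hU hV hUV v = V :=
  (RingQuot.liftAlgHom_mkAlgHom_apply E _ _ _).trans (by simp)

end lift

theorem span_eq_top :
    Submodule.span E {1, u, v, u * v} = (⊤ : Submodule E (Quat E a b)) := by
  set S := Submodule.span E ({1, u, v, u * v} : Set (Quat E a b))
  have one_mem : 1 ∈ S := Submodule.subset_span (by simp)
  have u_mem : u ∈ S := Submodule.subset_span (by simp)
  have v_mem : v ∈ S := Submodule.subset_span (by simp)
  have uv_mem : u * v ∈ S := Submodule.subset_span (by simp)
  have left_mul_mem (z : Quat E a b) (hz : ∀ y ∈ ({1, u, v, u * v} : Set (Quat E a b)), z * y ∈ S)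
      (y : Quat E a b) (hy : y ∈ S) : z * y ∈ S :=
    (Submodule.span_le (p := S.comap (LinearMap.mulLeft E z))).2 hz hy
  have u_mul_mem : ∀ y ∈ S, u * y ∈ S := by
    refine left_mul_mem u ?_
    rintro y (rfl | rfl | rfl | rfl)
    · simpa using u_mem
    · rw [u_mul_u, Algebra.algebraMap_eq_smul_one]
      exact S.add_mem (S.smul_mem a one_mem) u_mem
    · exact uv_mem
    · rw [← mul_assoc, u_mul_u, add_mul, ← Algebra.smul_def]
      exact S.add_mem (S.smul_mem a v_mem) uv_mem
  have v_mul_mem : ∀ y ∈ S, v * y ∈ S := by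
    refine left_mul_mem v ?_
    rintro y (rfl | rfl | rfl | rfl)
    · simpa using v_mem
    · rw [v_mul_u]
      exact S.sub_mem uv_mem v_mem
    · rw [v_mul_v, Algebra.algebraMap_eq_smul_one]
      exact S.smul_mem b one_mem
    · rw [← mul_assoc, v_mul_u, sub_mul, mul_assoc, v_mul_v, ← Algebra.commutes,
        ← Algebra.smul_def, Algebra.algebraMap_eq_smul_one]
      exact S.sub_mem (S.smul_mem b u_mem) (S.smul_mem b one_mem)
  have mk_mul_mem (w : FreeAlgebra E (Fin 2)) :
      ∀ y ∈ S, mkAlgHom w * y ∈ S := by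
    induction w using FreeAlgebra.induction with
    | grade0 r =>
      intro y hy
      rw [AlgHom.commutes, ← Algebra.smul_def]
      exact S.smul_mem r hy
    | grade1 i =>
      fin_cases i
      exacts [u_mul_mem, v_mul_mem]
    | mul w₁ w₂ h₁ h₂ =>
      intro y hy
      rw [map_mul, mul_assoc]
      exact h₁ _ (h₂ y hy)
    | add w₁ w₂ h₁ h₂ =>
      intro y hy
      rw [map_add, add_mul]
      exact S.add_mem (h₁ y hy) (h₂ y hy)
  refine eq_top_iff.2 fun z _ ↦ ?_
  obtain ⟨w, rfl⟩ := mkAlgHom_surjective z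
  simpa using mk_mul_mem w 1 one_mem

instance : Module.Finite E (Quat E a b) :=
  ⟨Submodule.fg_def.2 ⟨_, Set.toFinite _, span_eq_top⟩⟩

theorem finrank_le_four : Module.finrank E (Quat E a b) ≤ 4 := by
  classical
  have h := finrank_span_finset_le_card (R := E) ({1, u, v, u * v} : Finset (Quat E a b))
  rw [Set.finrank, Finset.coe_insert, Finset.coe_insert, Finset.coe_insert, Finset.coe_singleton,
    span_eq_top, finrank_top] at h
  exact h.trans Finset.card_le_four

end Quat

theorem LinearMap.bijective_of_surjective_of_finrank_le {K V W : Type*} [DivisionRing K]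
    [AddCommGroup V] [Module K V] [AddCommGroup W] [Module K W] [FiniteDimensional K V]
    {f : V →ₗ[K] W} (hf : Function.Surjective f) (h : Module.finrank K V ≤ Module.finrank K W) :
    Function.Bijective f :=
  have : FiniteDimensional K W := Module.Finite.of_surjective f hf
  ⟨(injective_iff_surjective_of_finrank_eq_finrank
    (h.antisymm (finrank_le_finrank_of_surjective hf))).2 hf, hf⟩

namespace Matrix

variable {E : Type*} [Field E]

theorem subalgebra_eq_top_of_single_one_one_mem {S : Subalgebra E (Matrix (Fin 2) (Fin 2) E)}
    {b : E} (hb : b ≠ 0) (h₁₁ : single 1 1 1 ∈ S) (hV : !![0, 1; b, 0] ∈ S) : S = ⊤ := by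
  have h₀₁ : single 0 1 1 ∈ S := by
    convert S.mul_mem hV h₁₁ using 1
    ext i j; fin_cases i <;> fin_cases j <;> simp [single_apply, mul_apply]
  have h₁₀ : single 1 0 1 ∈ S := by
    convert S.smul_mem (S.mul_mem h₁₁ hV) b⁻¹ using 1
    ext i j; fin_cases i <;> fin_cases j <;> simp [single_apply, mul_apply, hb]
  have h₀₀ : single 0 0 1 ∈ S := by
    convert S.sub_mem S.one_mem h₁₁ using 1
    ext i j; fin_cases i <;> fin_cases j <;> simp
  have single_mem (i j : Fin 2) : single i j 1 ∈ S := by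
    fin_cases i <;> fin_cases j
    exacts [h₀₀, h₀₁, h₁₀, h₁₁]
  refine eq_top_iff.2 fun M _ ↦ ?_
  rw [matrix_eq_sum_single M]
  refine S.sum_mem fun i _ ↦ S.sum_mem fun j _ ↦ ?_
  simpa [smul_single] using S.smul_mem (single_mem i j) (M i j)

end Matrix

section CharTwo

variable {E : Type*} [Field E] [CharP E 2] {a b : E}

open Matrix

theorem exists_add_sq_mul_eq_of_matrix {U V : Matrix (Fin 2) (Fin 2) E}
    (hU : U * U = algebraMap E _ a + U) (hV : V * V = algebraMap E _ b)
    (hUV : U * V = V * U + V) (hb : ¬ ∃ e : E, e ^ 2 = b) :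
    ∃ c x : E, a + c ^ 2 * b = x ^ 2 + x := by
  have hU₀₀ : U 0 0 * U 0 0 + U 0 1 * U 1 0 = a + U 0 0 := by
    simpa [mul_apply, algebraMap_matrix_apply] using congrFun (congrFun hU 0) 0
  have hV₀₀ : V 0 0 * V 0 0 + V 0 1 * V 1 0 = b := by
    simpa [mul_apply, algebraMap_matrix_apply] using congrFun (congrFun hV 0) 0
  have hUV₀₀ : U 0 0 * V 0 0 + U 0 1 * V 1 0 = V 0 0 * U 0 0 + V 0 1 * U 1 0 + V 0 0 := by
    simpa [mul_apply] using congrFun (congrFun hUV 0) 0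
  have hV₁₀ : V 1 0 ≠ 0 := fun h ↦ hb ⟨V 0 0, by simpa [h, sq] using hV₀₀⟩
  -- the coordinates of `U e₀` in the basis `e₀, V e₀`
  refine ⟨U 1 0 / V 1 0, (V 0 0 * U 1 0 + U 0 0 * V 1 0) / V 1 0, ?_⟩
  field_simp
  grind

namespace Quat

theorem exists_add_sq_mul_eq_of_algHom (f : Quat E a b →ₐ[E] Matrix (Fin 2) (Fin 2) E)
    (hb : ¬ ∃ e : E, e ^ 2 = b) : ∃ c x : E, a + c ^ 2 * b = x ^ 2 + x :=
  exists_add_sq_mul_eq_of_matrix (by simpa using congrArg f u_mul_u)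
    (by simpa using congrArg f v_mul_v) (by simpa using congrArg f u_mul_v) hb

variable {c x : E}

noncomputable def toMatrix (hc : a + c ^ 2 * b = x ^ 2 + x) :
    Quat E a b →ₐ[E] Matrix (Fin 2) (Fin 2) E :=
  lift !![x, c; c * b, x + 1] !![0, 1; b, 0]
    (by rw [algebraMap_eq_diagonal]; ext i j; fin_cases i <;> fin_cases j <;> simp <;> grind)
    (by rw [algebraMap_eq_diagonal]; ext i j; fin_cases i <;> fin_cases j <;> simp)
    (by simp; grind)

theorem toMatrix_bijective (hb : b ≠ 0) (hc : a + c ^ 2 * b = x ^ 2 + x) :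
    Function.Bijective (toMatrix hc) := by
  have hsurj : Function.Surjective (toMatrix hc) := by
    rw [← AlgHom.range_eq_top]
    have hU : !![x, c; c * b, x + 1] ∈ (toMatrix hc).range := ⟨u, lift_u ..⟩
    have hV : !![0, 1; b, 0] ∈ (toMatrix hc).range := ⟨v, lift_v ..⟩
    refine subalgebra_eq_top_of_single_one_one_mem hb ?_ hV
    convert add_mem (add_mem hU (algebraMap_mem _ x)) (Subalgebra.smul_mem _ hV c) using 1
    rw [algebraMap_eq_diagonal]
    ext i j; fin_cases i <;> fin_cases j <;> simp <;> grind
  exact LinearMap.bijective_of_surjective_of_finrank_le (f := (toMatrix hc).toLinearMap) hsurj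
    (by simpa [Module.finrank_matrix] using finrank_le_four (E := E) (a := a) (b := b))

end Quat

end CharTwo

theorem stmt3_general (E : Type*) [Field E] [CharP E 2] (a b : E)
    (hb2 : ¬ ∃ e : E, e ^ 2 = b) :
    Nonempty (Quat E a b ≃ₐ[E] Matrix (Fin 2) (Fin 2) E) ↔
      ∃ c x : E, a + c ^ 2 * b = x ^ 2 + x := by
  have hb : b ≠ 0 := fun h ↦ hb2 ⟨0, by simp [h]⟩
  exact ⟨fun ⟨g⟩ ↦ Quat.exists_add_sq_mul_eq_of_algHom g.toAlgHom hb2,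
    fun ⟨_, _, hc⟩ ↦ ⟨AlgEquiv.ofBijective _ (Quat.toMatrix_bijective hb hc)⟩⟩

/-- If `b ∉ E^{×2}`, then `[a,b)_E` splits iff `a + c²·b ∈ ℘(E)`
for some `c ∈ E`. -/
theorem stmt3 (E : Type*) [Field E] [CharP E 2] (a b : E) (hb : b ≠ 0)
    (hb2 : ¬ ∃ e : E, e ^ 2 = b) :
    Nonempty (Quat E a b ≃ₐ[E] Matrix (Fin 2) (Fin 2) E) ↔
      ∃ c x : E, a + c ^ 2 * b = x ^ 2 + x :=
  stmt3_general E a b hb2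
end

section
/- Let (A, σ) be a ring with involution over a field E of characteristic 2 such that σ is anisotropic in the following sense: σ(x)·x ∈ Alt(A,σ) implies x = 0 (for x ∈ A). If x ∈ Sym(A,σ) and x² + α·1 ∈ Alt(A,σ) for some α ∈ E, then x² = α·1. -/
/-- Let `(A,σ)` be an algebra with involution over a field `E` of
characteristic 2, with `σ` anisotropic in the sense that `σ(x)·x ∈ Alt(A,σ)` implies
`x = 0`. If `x` is symmetric and `x² + α·1 ∈ Alt(A,σ)` for some `α ∈ E`, then
`x² = α·1`. -/
theorem stmt14 (E A : Type*) [Field E] [CharP E 2] [Ring A] [Algebra E A]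
    (σ : A → A)
    (hadd : ∀ a b : A, σ (a + b) = σ a + σ b)
    (hmul : ∀ a b : A, σ (a * b) = σ b * σ a)
    (hinv : ∀ a : A, σ (σ a) = a)
    (hlin : ∀ c : E, σ (algebraMap E A c) = algebraMap E A c)
    (haniso : ∀ x : A, (∃ z : A, σ x * x = z - σ z) → x = 0)
    (x : A) (hx : σ x = x) (α : E)
    (hAlt : ∃ z : A, x ^ 2 + algebraMap E A α = z - σ z) :
    x ^ 2 = algebraMap E A α := by
  obtain ⟨z, hz⟩ := hAlt
  set a : A := algebraMap E A α with ha_def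
  have hσa : σ a = a := hlin α
  have haa : a + a = 0 := by
    rw [ha_def, ← map_add]
    rw [CharTwo.add_self_eq_zero α, map_zero]
  have hc : ∀ b : A, a * b = b * a := fun b => Algebra.commutes α b
  set y : A := x ^ 2 + a with hy_def
  have hσy : σ y = y := by
    rw [hy_def, hadd, hσa]
    congr 1
    rw [pow_two, hmul, hx, ← pow_two]
  have hkey : y * y = x * y * x + a * y := by
    calc y * y = x*x*x*x + x*(x*a) + a*(x*x) + a*a := by
          rw [hy_def, pow_two]; noncomm_ring
      _ = x*x*x*x + x*(a*x) + a*(x*x) + a*a := by rw [← hc x]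
      _ = x * y * x + a * y := by rw [hy_def, pow_two]; noncomm_ring
  have hyz : y = z - σ z := hz
  have hσw : σ (x*z*x + a*z) = x * σ z * x + a * σ z := by
    rw [hadd, hmul, hmul, hmul, hx, hσa, hc (σ z)]
    noncomm_ring
  have hAltyy : σ y * y = (x*z*x + a*z) - σ (x*z*x + a*z) := by
    rw [hσy, hkey, hσw, hyz]
    have := hc z
    have := hc (σ z)
    noncomm_ring
  have hy0 : y = 0 := haniso y ⟨x*z*x + a*z, hAltyy⟩
  have : x ^ 2 + a = 0 := hy0
  calc x ^ 2 = (x ^ 2 + a) + a := by rw [add_assoc, haa, add_zero]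
    _ = a := by rw [this, zero_add]
end

section
/- Let F be a field of characteristic 2 and let v, v' be commuting elements of an F-algebra with v² = b + cη and v'² = b + c + cη for b, c ∈ F, where η satisfies η² + η = δ ∈ F. Set u = v + v' and w = (1+η)v + ηv'. Then u² = c and w² = b + cδ; in particular u² and w² lie in F, and v = ηu + w. -/
/-- Let `F` have characteristic 2 and let `v, v'` be commuting elements
of an `F`-algebra containing an element `η` with `η² + η = δ ∈ F`, such that
`v² = b + cη` and `v'² = b + c + cη` for `b, c ∈ F`. Setting `u = v + v'` and
`w = (1+η)v + ηv'`, one has `u² = c` and `w² = b + cδ` (both in `F`), and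
`v = ηu + w`. -/
theorem stmt16 (F A : Type*) [Field F] [CharP F 2] [Ring A] [Algebra F A]
    (δ b c : F) (η v v' : A)
    (hη : η ^ 2 + η = algebraMap F A δ)
    (hcomm : Commute v v') (hηv : Commute η v) (hηv' : Commute η v')
    (hv : v ^ 2 = algebraMap F A b + algebraMap F A c * η)
    (hv' : v' ^ 2 = algebraMap F A (b + c) + algebraMap F A c * η) :
    (v + v') ^ 2 = algebraMap F A c ∧
    ((1 + η) * v + η * v') ^ 2 = algebraMap F A (b + c * δ) ∧
    v = η * (v + v') + ((1 + η) * v + η * v') := by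
  have hsc : ∀ a ∈ ({η, v, v'} : Set A), ∀ b ∈ ({η, v, v'} : Set A), a * b = b * a := by
    rintro a (rfl|rfl|rfl) z (rfl|rfl|rfl) <;>
      first
        | rfl
        | exact hηv.eq | exact hηv.symm.eq
        | exact hηv'.eq | exact hηv'.symm.eq
        | exact hcomm.eq | exact hcomm.symm.eq
  letI : CommRing (Algebra.adjoin F ({η, v, v'} : Set A)) :=
    Algebra.adjoinCommRingOfComm F hsc
  have hmemη : η ∈ Algebra.adjoin F ({η, v, v'} : Set A) := Algebra.subset_adjoin (by simp)
  have hmemv : v ∈ Algebra.adjoin F ({η, v, v'} : Set A) := Algebra.subset_adjoin (by simp)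
  have hmemv' : v' ∈ Algebra.adjoin F ({η, v, v'} : Set A) := Algebra.subset_adjoin (by simp)
  set e : Algebra.adjoin F ({η, v, v'} : Set A) := ⟨η, hmemη⟩ with he
  set x : Algebra.adjoin F ({η, v, v'} : Set A) := ⟨v, hmemv⟩ with hx
  set y : Algebra.adjoin F ({η, v, v'} : Set A) := ⟨v', hmemv'⟩ with hy
  have h2F : (2 : F) = 0 := by
    have := CharP.cast_eq_zero F 2
    simpa using this
  have h2 : (2 : Algebra.adjoin F ({η, v, v'} : Set A)) = 0 := by
    have h := map_ofNat (algebraMap F (Algebra.adjoin F ({η, v, v'} : Set A))) 2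
    rw [← h, show ((2 : F) : F) = (2 : F) by norm_num, h2F, map_zero]
  have hη₀ : e ^ 2 + e = algebraMap F _ δ := Subtype.ext hη
  have hv₀ : x ^ 2 = algebraMap F _ b + algebraMap F _ c * e := Subtype.ext hv
  have hv'₀ : y ^ 2 = algebraMap F _ b + algebraMap F _ c + algebraMap F _ c * e := by
    rw [map_add] at hv'
    exact Subtype.ext hv'
  have key1 : (x + y) ^ 2 = algebraMap F _ c := by
    linear_combination hv₀ + hv'₀
      + (algebraMap F _ b + algebraMap F _ c * e + x * y) * h2
  have key2 : ((1 + e) * x + e * y) ^ 2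
      = algebraMap F _ b + algebraMap F _ c * algebraMap F _ δ := by
    linear_combination (1 + e) ^ 2 * hv₀ + e ^ 2 * hv'₀
      + (2 * algebraMap F _ c * e + algebraMap F _ c + 2 * algebraMap F _ b) * hη₀
      + (algebraMap F _ b * algebraMap F _ δ
          + algebraMap F _ c * algebraMap F _ δ * e + (1 + e) * e * x * y) * h2
  have key3 : x = e * (x + y) + ((1 + e) * x + e * y) := by
    linear_combination (-(e * x) - e * y) * h2
  refine ⟨congrArg Subtype.val key1, ?_, congrArg Subtype.val key3⟩
  rw [map_add, map_mul]
  exact congrArg Subtype.val key2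
end
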